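/- A matrix M ∈ SL(2,ℂ) has nonzero (2,2) entry if and only if it admits a factorization M = L(ω,ζ)·W(u,β) where L(ω,ζ) is the matrix with rows (ω^{-1/2}, ω^{1/2} ζ) and (0, ω^{1/2}), and W(u,β) is the matrix with rows (u, 0) and (β·conj(u), conj(u)), for some ω > 0, ζ ∈ ℂ, β ∈ ℂ, and u ∈ ℂ with |u| = 1; moreover the quadruple (ω, ζ, β, u) is then unique. (This is the Gauss-type factorization SL(2,ℂ) = L·(ĨSO(2)) with W parametrizing the double cover of the Euclidean little group, covering SL(2,ℂ) up to the measure-zero set of matrices with vanishing (2,2) entry; here u = e^{iα/2}.) -/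

import Mathlib

noncomputable section

/-- The lower-triangular factor `L(ω,ζ)` with rows `(ω^{-1/2}, ω^{1/2}ζ)` and
`(0, ω^{1/2})`. -/
def Lmat (ω : ℝ) (ζ : ℂ) : Matrix (Fin 2) (Fin 2) ℂ :=
  !![((Real.sqrt ω : ℝ) : ℂ)⁻¹, ((Real.sqrt ω : ℝ) : ℂ) * ζ;
     0, ((Real.sqrt ω : ℝ) : ℂ)]

/-- The little-group factor `W(u,β)` with rows `(u, 0)` and `(β·conj u, conj u)`,
parametrizing the double cover of the Euclidean group `ISO(2)` (here `u = e^{iα/2}`). -/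
def Wmat (u β : ℂ) : Matrix (Fin 2) (Fin 2) ℂ :=
  !![u, 0; β * starRingEnd ℂ u, starRingEnd ℂ u]

lemma LW_mul (ω : ℝ) (ζ u β : ℂ) :
    Lmat ω ζ * Wmat u β =
      !![((Real.sqrt ω : ℝ) : ℂ)⁻¹ * u + ((Real.sqrt ω : ℝ) : ℂ) * ζ * (β * starRingEnd ℂ u),
         ((Real.sqrt ω : ℝ) : ℂ) * ζ * starRingEnd ℂ u;
         ((Real.sqrt ω : ℝ) : ℂ) * (β * starRingEnd ℂ u),
         ((Real.sqrt ω : ℝ) : ℂ) * starRingEnd ℂ u] := by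
  rw [Lmat, Wmat, Matrix.mul_fin_two]
  norm_num

/-- Gauss-type factorization of `SL(2,ℂ)`: a matrix `M ∈ SL(2,ℂ)` has nonzero `(2,2)`
entry iff it admits a factorization `M = L(ω,ζ)·W(u,β)` with `ω > 0`, `ζ, β ∈ ℂ` and
`|u| = 1`, and in that case the quadruple `(ω, ζ, β, u)` is unique. -/
theorem gauss_factorization (M : Matrix.SpecialLinearGroup (Fin 2) ℂ) :
    (M : Matrix (Fin 2) (Fin 2) ℂ) 1 1 ≠ 0 ↔
      ∃! q : ℝ × ℂ × ℂ × ℂ,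
        0 < q.1 ∧ ‖q.2.2.2‖ = 1 ∧
          (M : Matrix (Fin 2) (Fin 2) ℂ) = Lmat q.1 q.2.1 * Wmat q.2.2.2 q.2.2.1 := by
  set a := (M : Matrix (Fin 2) (Fin 2) ℂ) 0 0 with ha
  set b := (M : Matrix (Fin 2) (Fin 2) ℂ) 0 1 with hb
  set c := (M : Matrix (Fin 2) (Fin 2) ℂ) 1 0 with hc
  set d := (M : Matrix (Fin 2) (Fin 2) ℂ) 1 1 with hd
  have hdet : a * d - b * c = 1 := by
    have := M.2
    rwa [Matrix.det_fin_two] at this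
  constructor
  · intro hdne
    have habs : (0:ℝ) < ‖d‖ := norm_pos_iff.mpr hdne
    have habsC : ((‖d‖ : ℝ) : ℂ) ≠ 0 := by
      exact_mod_cast habs.ne'
    refine ⟨(‖d‖ ^ 2, b / d, c / d, starRingEnd ℂ d / (‖d‖ : ℝ)), ⟨pow_pos habs 2, ?_, ?_⟩, ?_⟩
    · simp [map_div₀, habs.ne']
    · have hsqrt : Real.sqrt (‖d‖ ^ 2) = ‖d‖ :=
        Real.sqrt_sq habs.le
      have hM : (M : Matrix (Fin 2) (Fin 2) ℂ) = !![a, b; c, d] := by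
        rw [ha, hb, hc, hd]
        exact (Matrix.eta_fin_two _)
      rw [hM, LW_mul, hsqrt]
      have hconj : starRingEnd ℂ (starRingEnd ℂ d / (‖d‖ : ℝ)) =
          d / (‖d‖ : ℝ) := by
        simp [map_div₀]
      rw [hconj]
      have hdd : d * starRingEnd ℂ d = ((‖d‖ : ℝ) : ℂ) ^ 2 := by
        rw [Complex.mul_conj, Complex.normSq_eq_norm_sq]
        push_cast
        ring
      refine Matrix.ext fun i j => ?_
      fin_cases i <;> fin_cases j <;>
        simp only [Matrix.of_apply, Matrix.cons_val', Matrix.cons_val_zero, Matrix.cons_val_one,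
          Matrix.head_cons, Matrix.empty_val', Matrix.cons_val_fin_one, Fin.mk_one,
          Fin.zero_eta, Fin.isValue, Matrix.head_fin_const]
      · have e1 : (((‖d‖ : ℝ) : ℂ))⁻¹ * (starRingEnd ℂ d / ((‖d‖ : ℝ) : ℂ)) = 1 / d := by
          rw [eq_div_iff hdne]
          field_simp
          linear_combination hdd
        have e2 : ((‖d‖ : ℝ) : ℂ) * (b / d) * (c / d * (d / ((‖d‖ : ℝ) : ℂ))) = b * c / d := by
          field_simp
        rw [e1, e2, ← add_div, eq_div_iff hdne]
        linear_combination hdet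
      · field_simp
      · field_simp
      · field_simp
    · rintro ⟨ω, ζ, β, u⟩ ⟨hω, hu, heq⟩
      have hs : (0:ℝ) < Real.sqrt ω := Real.sqrt_pos.mpr hω
      have h11 : d = ((Real.sqrt ω : ℝ) : ℂ) * starRingEnd ℂ u := by
        have := congrFun (congrFun heq 1) 1
        rw [LW_mul] at this
        simpa using this
      have habsd : ‖d‖ = Real.sqrt ω := by
        rw [h11]
        simp [hu, Complex.norm_conj, abs_of_pos hs]
      have hων : ω = ‖d‖ ^ 2 := by
        rw [habsd, Real.sq_sqrt hω.le]
      have hcd : starRingEnd ℂ d = ((Real.sqrt ω : ℝ) : ℂ) * u := by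
        rw [h11]; simp [Complex.conj_ofReal]
      have huv : u = starRingEnd ℂ d / (‖d‖ : ℝ) := by
        rw [hcd, habsd, mul_comm, mul_div_assoc, div_self, mul_one]
        exact_mod_cast hs.ne'
      have h01 : b = ζ * d := by
        have h := congrFun (congrFun heq 0) 1
        rw [LW_mul] at h
        simp at h
        rw [← hb] at h
        rw [h, h11]; ring
      have h10 : c = β * d := by
        have h := congrFun (congrFun heq 1) 0
        rw [LW_mul] at h
        simp at h
        rw [← hc] at h
        rw [h, h11]; ring
      have hdne : d ≠ 0 := by
        rw [h11]
        simp only [ne_eq, mul_eq_zero, not_or]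
        constructor
        · exact_mod_cast hs.ne'
        · simp only [map_eq_zero]
          intro h
          rw [h] at hu; simp at hu
      ext
      · exact hων
      · rw [h01]; field_simp
      · rw [h10]; field_simp
      · exact huv
  · rintro ⟨⟨ω, ζ, β, u⟩, ⟨hω, hu, heq⟩, -⟩
    have hs : (0:ℝ) < Real.sqrt ω := Real.sqrt_pos.mpr hω
    have h11 : d = ((Real.sqrt ω : ℝ) : ℂ) * starRingEnd ℂ u := by
      have := congrFun (congrFun heq 1) 1
      rw [LW_mul] at this
      simpa using this
    rw [hd] at h11 ⊢
    rw [h11]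
    simp only [ne_eq, mul_eq_zero, not_or]
    constructor
    · exact_mod_cast hs.ne'
    · simp only [map_eq_zero]
      intro h
      rw [h] at hu; simp at hu
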